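/- arXiv:1502.06494 — 4 statements merged into one kernel-verified Lean document; each statement's English description precedes it below -/
import Mathlib

section
/- (Farkas lemma, functional form) Let E be a real vector space, f, g₁, …, gₙ : E → ℝ linear functionals. Then f(x) ≥ 0 for every x with g₁(x) ≥ 0, …, gₙ(x) ≥ 0 if and only if there exist nonnegative reals λ₁, …, λₙ with f = λ₁ g₁ + ⋯ + λₙ gₙ. -/
/-!
Induction on the number of constraints. If the last constraint `a` is redundant we are done.
Otherwise some `x₀` satisfies the other constraints with `f x₀ < 0`, which forces `a x₀ < 0`.
On the hyperplane `ker a` the remaining constraints imply `0 ≤ f`, so by induction `f` agrees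
there with a nonnegative combination of them; the difference vanishes on `ker a`, hence is `μ • a`,
and evaluating at `x₀` shows `μ > 0`.
-/

open LinearMap

theorem LinearMap.exists_eq_smul_of_ker_le {𝕜 E : Type*} [Field 𝕜] [AddCommGroup E] [Module 𝕜 E]
    {a φ : E →ₗ[𝕜] 𝕜} (h : ker a ≤ ker φ) : ∃ μ : 𝕜, φ = μ • a := by
  have hφ : φ ∈ Submodule.span 𝕜 (Set.range fun _ : Unit => a) :=
    mem_span_of_iInf_ker_le_ker (by rwa [iInf_const])
  rw [Set.range_const, Submodule.mem_span_singleton] at hφ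
  obtain ⟨μ, rfl⟩ := hφ
  exact ⟨μ, rfl⟩

theorem exists_nonneg_sum_smul_of_castSucc {R M : Type*} [Semiring R] [PartialOrder R]
    [AddCommMonoid M] [Module R M] {n : ℕ} {v : M} {g : Fin (n + 1) → M}
    {lam : Fin n → R} {μ : R} (hlam : ∀ i, 0 ≤ lam i) (hμ : 0 ≤ μ)
    (hv : v = ∑ i, lam i • g i.castSucc + μ • g (Fin.last n)) :
    ∃ lam' : Fin (n + 1) → R, (∀ i, 0 ≤ lam' i) ∧ v = ∑ i, lam' i • g i :=
  ⟨Fin.snoc lam μ, Fin.lastCases (by simpa) (by simpa),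
    by simpa [Fin.sum_univ_castSucc] using hv⟩

section

variable {𝕜 E : Type*} [Field 𝕜] [LinearOrder 𝕜] [IsStrictOrderedRing 𝕜]
  [AddCommGroup E] [Module 𝕜 E]

theorem LinearMap.eq_zero_of_forall_nonneg {f : E →ₗ[𝕜] 𝕜} (h : ∀ x, 0 ≤ f x) : f = 0 :=
  ext fun x => le_antisymm (by simpa using h (-x)) (h x)

theorem exists_nonneg_sum_smul_eq_of_forall_nonneg {n : ℕ} (f : E →ₗ[𝕜] 𝕜)
    (g : Fin n → E →ₗ[𝕜] 𝕜) (h : ∀ x, (∀ i, 0 ≤ g i x) → 0 ≤ f x) :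
    ∃ lam : Fin n → 𝕜, (∀ i, 0 ≤ lam i) ∧ f = ∑ i, lam i • g i := by
  induction n generalizing E with
  | zero => exact ⟨0, finZeroElim, by simpa using eq_zero_of_forall_nonneg fun x => h x finZeroElim⟩
  | succ n ih =>
    set a := g (Fin.last n)
    by_cases hred : ∀ x, (∀ i : Fin n, 0 ≤ g i.castSucc x) → 0 ≤ f x
    · obtain ⟨lam, hlam, hf⟩ := ih f _ hred
      exact exists_nonneg_sum_smul_of_castSucc hlam le_rfl (by simpa using hf)
    push Not at hred
    obtain ⟨x₀, hx₀, hfx₀⟩ := hred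
    have hax₀ : a x₀ < 0 := by
      by_contra! ha
      exact hfx₀.not_ge (h x₀ (Fin.lastCases ha hx₀))
    obtain ⟨lam, hlam, hker⟩ := ih (f ∘ₗ (ker a).subtype) (fun i => g i.castSucc ∘ₗ (ker a).subtype)
      fun y hy => h y (Fin.lastCases (mem_ker.1 y.2).ge hy)
    obtain ⟨μ, hμ⟩ := exists_eq_smul_of_ker_le (a := a) (φ := f - ∑ i, lam i • g i.castSucc)
      fun y hy => by simpa [sub_eq_zero] using congr($hker ⟨y, hy⟩)
    have hμx₀ : μ * a x₀ = f x₀ - ∑ i, lam i * g i.castSucc x₀ := by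
      simpa using congr($hμ x₀).symm
    have hsum : 0 ≤ ∑ i, lam i * g i.castSucc x₀ :=
      Finset.sum_nonneg fun i _ => mul_nonneg (hlam i) (hx₀ i)
    have hμ_pos : 0 < μ := pos_of_mul_neg_left (by linarith) hax₀.le
    exact exists_nonneg_sum_smul_of_castSucc hlam hμ_pos.le (by rw [← hμ]; abel)

end

theorem farkas_lemma_general
    {E : Type*} [AddCommGroup E] [Module ℝ E]
    {n : ℕ} (f : E →ₗ[ℝ] ℝ) (g : Fin n → E →ₗ[ℝ] ℝ) :
    (∀ x : E, (∀ i, 0 ≤ g i x) → 0 ≤ f x) ↔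
      ∃ lam : Fin n → ℝ, (∀ i, 0 ≤ lam i) ∧ f = ∑ i, lam i • g i := by
  refine ⟨exists_nonneg_sum_smul_eq_of_forall_nonneg f g, ?_⟩
  rintro ⟨lam, hlam, rfl⟩ x hx
  simpa using Finset.sum_nonneg fun i _ => mul_nonneg (hlam i) (hx i)

/-- Farkas lemma, functional form, on a finite-dimensional real vector space. -/
theorem farkas_lemma
    {E : Type*} [AddCommGroup E] [Module ℝ E] [FiniteDimensional ℝ E]
    {n : ℕ} (f : E →ₗ[ℝ] ℝ) (g : Fin n → E →ₗ[ℝ] ℝ) :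
    (∀ x : E, (∀ i, 0 ≤ g i x) → 0 ≤ f x) ↔
      ∃ lam : Fin n → ℝ, (∀ i, 0 ≤ lam i) ∧ f = ∑ i, lam i • g i :=
  farkas_lemma_general f g
end

section
/- Let p and q be sublinear functions on a real vector space E. Then the subdifferential at zero of p + q equals the Minkowski sum of the subdifferentials at zero of p and of q: ∂(p+q)(0) = ∂p(0) + ∂q(0). -/
open Pointwise
/-- The subdifferential at `0` of a sublinear function `p` on a real vector space. -/
def subdiffAtZero {E : Type*} [AddCommGroup E] [Module ℝ E] (p : E → ℝ) :
    Set (E →ₗ[ℝ] ℝ) := {f | ∀ x, f x ≤ p x}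

/-- Sum rule of subdifferential calculus: `∂(p+q)(0) = ∂p(0) + ∂q(0)`. -/
theorem subdiff_add
    {E : Type*} [AddCommGroup E] [Module ℝ E]
    (p q : E → ℝ)
    (hpsub : ∀ x y, p (x + y) ≤ p x + p y)
    (hphom : ∀ (c : ℝ), 0 ≤ c → ∀ x, p (c • x) = c • p x)
    (hqsub : ∀ x y, q (x + y) ≤ q x + q y)
    (hqhom : ∀ (c : ℝ), 0 ≤ c → ∀ x, q (c • x) = c • q x) :
    subdiffAtZero (fun x => p x + q x) = subdiffAtZero p + subdiffAtZero q := by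
  have hp0 : p 0 = 0 := by simpa using hphom 0 le_rfl 0
  have hq0 : q 0 = 0 := by simpa using hqhom 0 le_rfl 0
  ext f
  constructor
  · intro hf
    -- hf : ∀ x, f x ≤ p x + q x
    set S : E → Set ℝ := fun x => {r | ∃ y, r = p y + q (y - x) + f x - f y} with hS
    have hmem : ∀ x y : E, p y + q (y - x) + f x - f y ∈ S x := fun x y => ⟨y, rfl⟩
    have hbdd : ∀ x : E, ∀ a ∈ S x, -p (-x) ≤ a := by
      rintro x a ⟨y, rfl⟩
      have h1 : f (y - x) ≤ p (y - x) + q (y - x) := hf _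
      have h2 : p (y - x) ≤ p y + p (-x) := by
        simpa [sub_eq_add_neg] using hpsub y (-x)
      have h3 : f (y - x) = f y - f x := map_sub f y x
      linarith
    have hbddBelow : ∀ x, BddBelow (S x) := fun x => ⟨-p (-x), fun a ha => hbdd x a ha⟩
    have hne : ∀ x, (S x).Nonempty := fun x => ⟨_, hmem x x⟩
    set r : E → ℝ := fun x => sInf (S x) with hr
    have r_le : ∀ (x : E), ∀ a ∈ S x, r x ≤ a := fun x a ha => csInf_le (hbddBelow x) ha
    have r_lb : ∀ x : E, -p (-x) ≤ r x := fun x => le_csInf (hne x) (hbdd x)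
    have r_le_p : ∀ x, r x ≤ p x := by
      intro x
      have := r_le x _ (hmem x x)
      simpa [hq0] using this
    have r_le_q : ∀ x, r x ≤ q (-x) + f x := by
      intro x
      have := r_le x _ (hmem x 0)
      simpa [hp0, zero_sub] using this
    have N_add : ∀ x y, r (x + y) ≤ r x + r y := by
      intro x y
      have key : ∀ a ∈ S x, ∀ b ∈ S y, r (x + y) ≤ a + b := by
        rintro a ⟨y1, rfl⟩ b ⟨y2, rfl⟩
        have h1 : p (y1 + y2) ≤ p y1 + p y2 := hpsub y1 y2
        have h2 : q (y1 + y2 - (x + y)) ≤ q (y1 - x) + q (y2 - y) := by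
          have := hqsub (y1 - x) (y2 - y)
          have heq : y1 - x + (y2 - y) = y1 + y2 - (x + y) := by abel
          rwa [heq] at this
        have h3 := r_le (x + y) _ (hmem (x + y) (y1 + y2))
        have h4 : f (x + y) = f x + f y := map_add f x y
        have h5 : f (y1 + y2) = f y1 + f y2 := map_add f y1 y2
        linarith
      have h1 : r (x + y) - r y ≤ r x := by
        apply le_csInf (hne x)
        intro a ha
        have h2 : r (x + y) - a ≤ r y := by
          apply le_csInf (hne y)
          intro b hb
          linarith [key a ha b hb]
        linarith
      linarith
    have key_hom : ∀ c : ℝ, 0 < c → ∀ x, c * r x ≤ r (c • x) := by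
      intro c hc x
      apply le_csInf
      · obtain ⟨a, ha⟩ := hne (c • x)
        exact ⟨a, ha⟩
      rintro b ⟨y1, rfl⟩
      have ha : p (c⁻¹ • y1) + q (c⁻¹ • y1 - x) + f x - f (c⁻¹ • y1) ∈ S x := hmem x _
      have h1 : c * p (c⁻¹ • y1) = p y1 := by
        rw [← smul_eq_mul, ← hphom c hc.le]
        rw [smul_smul, mul_inv_cancel₀ hc.ne', one_smul]
      have h2 : c * q (c⁻¹ • y1 - x) = q (y1 - c • x) := by
        rw [← smul_eq_mul, ← hqhom c hc.le, smul_sub, smul_smul,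
          mul_inv_cancel₀ hc.ne', one_smul]
      have h3 : c * f x = f (c • x) := (map_smul f c x).symm
      have h4 : c * f (c⁻¹ • y1) = f y1 := by
        have := map_smul f c (c⁻¹ • y1)
        rw [smul_smul, mul_inv_cancel₀ hc.ne', one_smul, smul_eq_mul] at this
        exact this.symm
      have h5 := r_le x _ ha
      calc c * r x ≤ c * (p (c⁻¹ • y1) + q (c⁻¹ • y1 - x) + f x - f (c⁻¹ • y1)) :=
            mul_le_mul_of_nonneg_left h5 hc.le
        _ = p y1 + q (y1 - c • x) + f (c • x) - f y1 := by
            rw [mul_sub, mul_add, mul_add, h1, h2, h3, h4]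
    have N_hom : ∀ c : ℝ, 0 < c → ∀ x, r (c • x) = c * r x := by
      intro c hc x
      refine le_antisymm ?_ (key_hom c hc x)
      have h1 := key_hom c⁻¹ (by positivity) (c • x)
      rw [smul_smul, inv_mul_cancel₀ hc.ne', one_smul] at h1
      have := mul_le_mul_of_nonneg_left h1 hc.le
      rwa [← mul_assoc, mul_inv_cancel₀ hc.ne', one_mul] at this
    have r0 : (0:ℝ) ≤ r 0 := by simpa [hp0] using r_lb 0
    obtain ⟨g, -, hg⟩ := exists_extension_of_le_sublinear ⟨⊥, 0⟩ r N_hom N_add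
      (by rintro ⟨x, hx⟩
          rcases Submodule.mem_bot ℝ |>.mp hx with rfl
          simpa using r0)
    have hgp : g ∈ subdiffAtZero p := fun x => (hg x).trans (r_le_p x)
    have hfgq : f - g ∈ subdiffAtZero q := by
      intro x
      have h1 : g (-x) ≤ q x + f (-x) := by simpa using (hg (-x)).trans (r_le_q (-x))
      have h2 : g (-x) = -g x := map_neg g x
      have h3 : f (-x) = -f x := map_neg f x
      have : (f - g) x = f x - g x := rfl
      rw [this]; linarith
    rw [Set.mem_add]
    exact ⟨g, hgp, f - g, hfgq, by abel⟩
  · rintro ⟨g, hg, h, hh, rfl⟩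
    intro x
    exact add_le_add (hg x) (hh x)
end

section
/- A real topological vector space admits a nonzero continuous linear functional if and only if it contains a nonempty proper open convex subset. -/
open Set

theorem LinearMap.setOf_lt_one_ne_univ {𝕜 E : Type*} [DivisionRing 𝕜] [Preorder 𝕜]
    [AddCommGroup E] [Module 𝕜 E] {f : E →ₗ[𝕜] 𝕜} (hf : f ≠ 0) :
    {x | f x < 1} ≠ univ := by
  obtain ⟨y, hy⟩ := LinearMap.surjective_of_ne_zero hf 1
  exact (ne_univ_iff_exists_notMem _).mpr ⟨y, by simp [hy]⟩

theorem ContinuousLinearMap.exists_nonempty_isOpen_convex_ne_univ {𝕜 E : Type*} [Field 𝕜]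
    [LinearOrder 𝕜] [IsStrictOrderedRing 𝕜] [TopologicalSpace 𝕜] [OrderClosedTopology 𝕜]
    [AddCommGroup E] [Module 𝕜 E] [TopologicalSpace E] {f : E →L[𝕜] 𝕜} (hf : f ≠ 0) :
    ∃ C : Set E, C.Nonempty ∧ C ≠ univ ∧ IsOpen C ∧ Convex 𝕜 C :=
  ⟨{x | f x < 1}, ⟨0, by simp⟩, LinearMap.setOf_lt_one_ne_univ (by exact_mod_cast hf),
    isOpen_lt f.continuous continuous_const, convex_halfSpace_lt f.toLinearMap.isLinear 1⟩

theorem exists_continuousLinearMap_ne_zero_of_isOpen_convex {E : Type*} [AddCommGroup E]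
    [Module ℝ E] [TopologicalSpace E] [IsTopologicalAddGroup E] [ContinuousSMul ℝ E]
    {C : Set E} (hne : C.Nonempty) (hC : C ≠ univ) (hCo : IsOpen C) (hCc : Convex ℝ C) :
    ∃ f : E →L[ℝ] ℝ, f ≠ 0 := by
  obtain ⟨x, hx⟩ := (ne_univ_iff_exists_notMem C).mp hC
  obtain ⟨f, hf⟩ := geometric_hahn_banach_open_point hCc hCo hx
  obtain ⟨a, ha⟩ := hne
  exact ⟨f, fun h => (hf a ha).ne (by simp [h])⟩

/-- A real topological vector space admits a nonzero continuous linear functional iff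
it contains a nonempty proper open convex subset. -/
theorem exists_nonzero_continuous_functional_iff
    {E : Type*} [AddCommGroup E] [Module ℝ E] [TopologicalSpace E]
    [IsTopologicalAddGroup E] [ContinuousSMul ℝ E] :
    (∃ f : E →L[ℝ] ℝ, f ≠ 0) ↔
      ∃ C : Set E, C.Nonempty ∧ C ≠ Set.univ ∧ IsOpen C ∧ Convex ℝ C :=
  ⟨fun ⟨_, hf⟩ => ContinuousLinearMap.exists_nonempty_isOpen_convex_ne_univ hf,
    fun ⟨_, hne, hC, hCo, hCc⟩ =>
      exists_continuousLinearMap_ne_zero_of_isOpen_convex hne hC hCo hCc⟩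
end

section
/- Let E be a Riesz space. If S : E → ℝ is a nonzero positive lattice homomorphism and T : E → ℝ is linear with 0 ≤ T ≤ S, then there is c ∈ [0,1] with T = c • S. -/
/-- Scalar instance of Kutateladze's characterization of lattice homomorphisms: the
order interval `[0, S]` for a nonzero real-valued Riesz homomorphism `S` consists
exactly of the multiples `c • S` with `c ∈ [0, 1]`. -/
theorem dominated_by_lattice_hom_is_multiple
    {E : Type*} [Lattice E] [AddCommGroup E] [Module ℝ E]
    [CovariantClass E E (· + ·) (· ≤ ·)]
    (S : E →ₗ[ℝ] ℝ) (hS0 : S ≠ 0)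
    (hSpos : ∀ x : E, 0 ≤ x → 0 ≤ S x)
    (hShom : ∀ x y : E, S (x ⊔ y) = S x ⊔ S y)
    (T : E →ₗ[ℝ] ℝ)
    (hT : ∀ x : E, 0 ≤ x → 0 ≤ T x ∧ T x ≤ S x) :
    ∃ c : ℝ, c ∈ Set.Icc (0 : ℝ) 1 ∧ T = c • S := by
  -- T vanishes on the kernel of S
  have hsub : ∀ y : E, (y ⊔ 0) - ((-y) ⊔ 0) = y := by
    intro y
    have h1 : (-y) ⊔ 0 = -(y ⊓ 0) := by rw [neg_inf, neg_zero]
    rw [h1, sub_neg_eq_add, add_comm, inf_add_sup, add_zero]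
  have hker : ∀ y : E, S y = 0 → T y = 0 := by
    intro y hy
    have hp : (0 : E) ≤ y ⊔ 0 := le_sup_right
    have hn : (0 : E) ≤ (-y) ⊔ 0 := le_sup_right
    have hSp : S (y ⊔ 0) = 0 := by
      rw [hShom, hy, map_zero, sup_idem]
    have hSn : S ((-y) ⊔ 0) = 0 := by
      rw [hShom, map_neg, hy, neg_zero, map_zero, sup_idem]
    have hTp : T (y ⊔ 0) = 0 :=
      le_antisymm (by rw [← hSp]; exact (hT _ hp).2) (hT _ hp).1
    have hTn : T ((-y) ⊔ 0) = 0 :=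
      le_antisymm (by rw [← hSn]; exact (hT _ hn).2) (hT _ hn).1
    have := hsub y
    calc T y = T ((y ⊔ 0) - ((-y) ⊔ 0)) := by rw [this]
    _ = T (y ⊔ 0) - T ((-y) ⊔ 0) := by rw [map_sub]
    _ = 0 := by rw [hTp, hTn, sub_zero]
  -- find a positive element with S p > 0
  obtain ⟨x, hx⟩ : ∃ x : E, S x ≠ 0 := by
    by_contra h
    push_neg at h
    exact hS0 (LinearMap.ext fun z => by rw [h z]; rfl)
  obtain ⟨p, hp0, hSp⟩ : ∃ p : E, 0 ≤ p ∧ 0 < S p := by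
    rcases eq_or_lt_of_le (hSpos (x ⊔ 0) le_sup_right) with h | h
    · refine ⟨(-x) ⊔ 0, le_sup_right, ?_⟩
      rcases eq_or_lt_of_le (hSpos ((-x) ⊔ 0) le_sup_right) with h2 | h2
      · exfalso
        apply hx
        have := hsub x
        calc S x = S ((x ⊔ 0) - ((-x) ⊔ 0)) := by rw [this]
        _ = S (x ⊔ 0) - S ((-x) ⊔ 0) := by rw [map_sub]
        _ = 0 := by rw [← h, ← h2, sub_zero]
      · exact h2
    · exact ⟨x ⊔ 0, le_sup_right, h⟩
  refine ⟨T p / S p, ⟨div_nonneg (hT p hp0).1 hSp.le, (div_le_one hSp).2 (hT p hp0).2⟩, ?_⟩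
  ext z
  have hy : S (z - (S z / S p) • p) = 0 := by
    rw [map_sub, map_smul, smul_eq_mul, div_mul_cancel₀ _ hSp.ne', sub_self]
  have := hker _ hy
  rw [map_sub, map_smul, smul_eq_mul, sub_eq_zero] at this
  simp only [LinearMap.smul_apply, smul_eq_mul]
  rw [this]
  field_simp
end
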